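/- Let p be a prime with p ≡ 1 (mod 16), let α be a generator of the multiplicative group of ℤ/pℤ, let C_i (indices mod 8) be the order-8 cyclotomic cosets, and let (i,j) (indices mod 8) be the order-8 cyclotomic numbers. Let S = C_0 ∪ C_7 and T = C_3 ∪ C_4. Then for every ℓ with 0 ≤ ℓ ≤ 7 and every h ∈ C_ℓ, the number of pairs (s,t) with s ∈ S, t ∈ T, and s + t = h equals x_ℓ := (3,ℓ) + (4,ℓ) + (4,ℓ+1) + (5,ℓ+1) (indices taken mod 8); moreover x_ℓ = x_{ℓ+4} for 0 ≤ ℓ ≤ 3. -/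

import Mathlib

/-!
Write `C i = α^i ⟨α^8⟩`; these classes multiply like their indices mod 8. Dividing a
representation `h = s + t` with `s ∈ C i`, `t ∈ C j`, `h ∈ C ℓ` by `s` gives `1 + t/s = h/s`,
which identifies such representations with the pairs counted by the cyclotomic number
`(j - i, ℓ - i)`. Splitting `S × T` into its four blocks of classes gives the formula for the
count. Inversion `z ↦ z⁻¹` gives `(a, b) = (-a, b - a)`, which carries the four terms of
`x_{ℓ+4}` onto those of `x_ℓ`.
-/

open Finset

theorem Set.antidiagonal_union_left {M : Type*} [Add M] (A A' B : Set M) (h : M) :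
    Set.antidiagonal (A ∪ A') B h = Set.antidiagonal A B h ∪ Set.antidiagonal A' B h := by
  ext
  simp [or_and_right]

theorem Set.antidiagonal_union_right {M : Type*} [Add M] (A B B' : Set M) (h : M) :
    Set.antidiagonal A (B ∪ B') h = Set.antidiagonal A B h ∪ Set.antidiagonal A B' h := by
  ext
  simp [or_and_right, and_or_left]

theorem Set.ncard_antidiagonal_union_left {M : Type*} [Add M] [Finite M] {A A' : Set M}
    (hA : Disjoint A A') (B : Set M) (h : M) :
    (Set.antidiagonal (A ∪ A') B h).ncard =
      (Set.antidiagonal A B h).ncard + (Set.antidiagonal A' B h).ncard := by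
  rw [Set.antidiagonal_union_left, Set.ncard_union_eq]
  exact Set.disjoint_left.2 fun _ hx hx' => hA.ne_of_mem hx.1 hx'.1 rfl

theorem Set.ncard_antidiagonal_union_right {M : Type*} [Add M] [Finite M] (A : Set M)
    {B B' : Set M} (hB : Disjoint B B') (h : M) :
    (Set.antidiagonal A (B ∪ B') h).ncard =
      (Set.antidiagonal A B h).ncard + (Set.antidiagonal A B' h).ncard := by
  rw [Set.antidiagonal_union_right, Set.ncard_union_eq]
  exact Set.disjoint_left.2 fun _ hx hx' => hB.ne_of_mem hx.2.1 hx'.2.1 rfl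

section ZPowMod

variable {G : Type*} [Group G] {g : G} {e f : ℕ}

theorem exists_lt_zpow_mul_add_eq (hg : orderOf g = e * f) (hf : f ≠ 0) (v i : ℤ) :
    ∃ u < f, g ^ ((e : ℤ) * u + i) = g ^ ((e : ℤ) * v + i) := by
  have hf' : (0 : ℤ) < f := by omega
  obtain ⟨u, hu⟩ := Int.eq_ofNat_of_zero_le (Int.emod_nonneg v hf'.ne')
  refine ⟨u, by have := Int.emod_lt_of_pos v hf'; omega, ?_⟩
  rw [zpow_eq_zpow_iff_modEq, hg, Nat.cast_mul, ← hu]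
  exact (Int.mod_modEq v f).mul_left'.add_right i

theorem eq_of_zpow_mul_add_eq (hg : orderOf g = e * f) (he : e ≠ 0) {u u' : ℕ} (hu : u < f)
    (hu' : u' < f) {i : ℤ} (h : g ^ ((e : ℤ) * u + i) = g ^ ((e : ℤ) * u' + i)) : u = u' := by
  rw [zpow_eq_zpow_iff_modEq, hg, Nat.cast_mul] at h
  exact Nat.ModEq.eq_of_lt_of_lt
    (Int.natCast_modEq_iff.1 ((h.add_right_cancel' i).mul_left_cancel' (by exact_mod_cast he)))
    hu hu'

end ZPowMod

section Cyclotomic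

variable {F : Type*} [Field F] (α : Fˣ) (e : ℕ)

def cyclotomicClass (i : ℤ) : Set F :=
  {x | ∃ v : ℤ, x = ((α ^ ((e : ℤ) * v + i) : Fˣ) : F)}

noncomputable def cyclotomicNumber (i j : ℤ) : ℕ :=
  {z : F | z ∈ cyclotomicClass α e i ∧ 1 + z ∈ cyclotomicClass α e j}.ncard

variable {α e}

local notation "C" => cyclotomicClass α e
local notation "N" => cyclotomicNumber α e

theorem cyclotomicClass_subset_of_modEq {i j : ℤ} (h : i ≡ j [ZMOD e]) : C i ⊆ C j := by
  obtain ⟨m, hm⟩ := Int.modEq_iff_dvd.1 h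
  rintro _ ⟨v, rfl⟩
  exact ⟨v - m, by rw [mul_sub, ← hm]; ring_nf⟩

theorem cyclotomicClass_congr {i j : ℤ} (h : i ≡ j [ZMOD e]) : C i = C j :=
  (cyclotomicClass_subset_of_modEq h).antisymm (cyclotomicClass_subset_of_modEq h.symm)

theorem ne_zero_of_mem_cyclotomicClass {x : F} {i : ℤ} (hx : x ∈ C i) : x ≠ 0 := by
  obtain ⟨v, rfl⟩ := hx
  exact Units.ne_zero _

theorem mul_mem_cyclotomicClass {x y : F} {a b : ℤ} (hx : x ∈ C a) (hy : y ∈ C b) :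
    x * y ∈ C (a + b) := by
  obtain ⟨v, rfl⟩ := hx
  obtain ⟨w, rfl⟩ := hy
  exact ⟨v + w, by rw [← Units.val_mul, ← zpow_add]; ring_nf⟩

theorem inv_mem_cyclotomicClass {x : F} {a : ℤ} (hx : x ∈ C a) : x⁻¹ ∈ C (-a) := by
  obtain ⟨v, rfl⟩ := hx
  exact ⟨-v, by rw [← Units.val_inv_eq_inv_val, ← zpow_neg]; ring_nf⟩

theorem div_mem_cyclotomicClass {x y : F} {a b : ℤ} (hx : x ∈ C a) (hy : y ∈ C b) :
    x / y ∈ C (a - b) := by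
  simpa only [div_eq_mul_inv, sub_eq_add_neg] using
    mul_mem_cyclotomicClass hx (inv_mem_cyclotomicClass hy)

theorem modEq_of_mem_cyclotomicClass (he : e ∣ orderOf α) {x : F} {a b : ℤ} (ha : x ∈ C a)
    (hb : x ∈ C b) : a ≡ b [ZMOD e] := by
  obtain ⟨v, rfl⟩ := ha
  obtain ⟨w, hw⟩ := hb
  have := (zpow_eq_zpow_iff_modEq.1 (Units.ext hw)).of_dvd (Int.natCast_dvd_natCast.2 he)
  simpa [Int.ModEq, Int.mul_add_emod_self_left] using this

theorem disjoint_cyclotomicClass (he : e ∣ orderOf α) {a b : ℤ} (h : ¬ a ≡ b [ZMOD e]) :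
    Disjoint (C a) (C b) :=
  Set.disjoint_left.2 fun _ ha hb => h (modEq_of_mem_cyclotomicClass he ha hb)

theorem cyclotomicNumber_congr {a a' b b' : ℤ} (ha : a ≡ a' [ZMOD e]) (hb : b ≡ b' [ZMOD e]) :
    N a b = N a' b' := by
  rw [cyclotomicNumber, cyclotomicNumber, cyclotomicClass_congr ha, cyclotomicClass_congr hb]

theorem inv_mem_cyclotomicClass_of_one_add_mem {z : F} {a b : ℤ} (hz : z ∈ C a)
    (hz1 : 1 + z ∈ C b) : z⁻¹ ∈ C (-a) ∧ 1 + z⁻¹ ∈ C (b - a) := by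
  refine ⟨inv_mem_cyclotomicClass hz, ?_⟩
  have : 1 + z⁻¹ = (1 + z) / z := by field_simp [ne_zero_of_mem_cyclotomicClass hz]; ring
  exact this ▸ div_mem_cyclotomicClass hz1 hz

theorem cyclotomicNumber_le_neg_sub [Finite F] (a b : ℤ) : N a b ≤ N (-a) (b - a) :=
  Set.ncard_le_ncard_of_injOn _ (fun _ hz => inv_mem_cyclotomicClass_of_one_add_mem hz.1 hz.2)
    inv_injective.injOn

theorem cyclotomicNumber_neg_sub [Finite F] (a b : ℤ) : N a b = N (-a) (b - a) :=
  (cyclotomicNumber_le_neg_sub a b).antisymm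
    (by simpa using cyclotomicNumber_le_neg_sub (-a) (b - a))

theorem ncard_antidiagonal_cyclotomicClass {h : F} {ℓ : ℤ} (hh : h ∈ C ℓ) (i j : ℤ) :
    (Set.antidiagonal (C i) (C j) h).ncard = N (j - i) (ℓ - i) := by
  have hh0 := ne_zero_of_mem_cyclotomicClass hh
  have key : Set.antidiagonal (C i) (C j) h = (fun z => (h / (1 + z), h / (1 + z) * z)) ''
      {z | z ∈ C (j - i) ∧ 1 + z ∈ C (ℓ - i)} := by
    ext ⟨s, t⟩
    simp only [Set.mem_antidiagonal, Set.mem_image, Set.mem_ofPred_eq, Prod.mk.injEq]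
    constructor
    · rintro ⟨hs, ht, rfl⟩
      have hs0 := ne_zero_of_mem_cyclotomicClass hs
      have h1 : 1 + t / s = (s + t) / s := by field_simp
      refine ⟨t / s, ⟨div_mem_cyclotomicClass ht hs, h1 ▸ div_mem_cyclotomicClass hh hs⟩, ?_, ?_⟩
        <;> field_simp
    · rintro ⟨z, ⟨hz, hz1⟩, rfl, rfl⟩
      have hz10 := ne_zero_of_mem_cyclotomicClass hz1
      have hs := div_mem_cyclotomicClass hh hz1
      refine ⟨by simpa using hs, by simpa using mul_mem_cyclotomicClass hs hz, by field_simp⟩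
  rw [key, Set.InjOn.ncard_image]
  · rfl
  intro z _ z' _ hzz
  simpa [hh0] using congrArg (h / ·) (Prod.mk.inj hzz).1

theorem cyclotomicNumber_eq_card_filter [DecidableEq F] {f : ℕ} (hα : orderOf α = e * f)
    (he : e ≠ 0) (hf : f ≠ 0) (i j : ℤ) :
    N i j = ((range f ×ˢ range f).filter fun uv : ℕ × ℕ =>
      1 + ((α ^ ((e : ℤ) * uv.1 + i) : Fˣ) : F) = ((α ^ ((e : ℤ) * uv.2 + j) : Fˣ) : F)).card := by
  rw [← Set.ncard_coe_finset]
  symm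
  refine Set.ncard_congr (fun uv _ => ((α ^ ((e : ℤ) * uv.1 + i) : Fˣ) : F)) ?_ ?_ ?_
  · rintro ⟨u, v⟩ huv
    exact ⟨⟨u, rfl⟩, ⟨v, (mem_filter.1 huv).2⟩⟩
  · rintro ⟨u, v⟩ ⟨u', v'⟩ huv huv' h
    simp only [coe_filter, mem_product, mem_range, Set.mem_ofPred_eq] at huv huv'
    obtain rfl := eq_of_zpow_mul_add_eq hα he huv.1.1 huv'.1.1 (Units.ext h)
    obtain rfl := eq_of_zpow_mul_add_eq hα he huv.1.2 huv'.1.2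
      (Units.ext (huv.2.symm.trans huv'.2))
    rfl
  · rintro z ⟨⟨v, rfl⟩, ⟨w, hw⟩⟩
    obtain ⟨u, hu, hvu⟩ := exists_lt_zpow_mul_add_eq hα hf v i
    obtain ⟨u', hu', hwu⟩ := exists_lt_zpow_mul_add_eq hα hf w j
    exact ⟨(u, u'), mem_filter.2 ⟨by simp [hu, hu'], by rw [hvu, hwu, hw]⟩, by rw [hvu]⟩

end Cyclotomic

/-- Let `p ≡ 1 (mod 16)` be prime, `α` a generator of `(ℤ/pℤ)ˣ`, `C i` the order-8
cyclotomic cosets and `N i j` the order-8 cyclotomic numbers (indices mod 8). With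
`S = C 0 ∪ C 7` and `T = C 3 ∪ C 4`, for `0 ≤ ℓ ≤ 7` and `h ∈ C ℓ` the number of
pairs `(s, t) ∈ S × T` with `s + t = h` equals
`x ℓ = N 3 ℓ + N 4 ℓ + N 4 (ℓ+ 1) + N 5 (ℓ+ 1)`, and `x ℓ = x (ℓ+4)` for `0 ≤ ℓ ≤ 3`. -/
theorem stmt_13 (p : ℕ) (hp : p.Prime) (h16 : p % 16 = 1)
    (α : (ZMod p)ˣ) (hα : ∀ x : (ZMod p)ˣ, x ∈ Subgroup.zpowers α)
    (C : ℤ → Set (ZMod p))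
    (hC : ∀ i : ℤ, C i = {x : ZMod p | ∃ v : ℤ, x = ((α ^ (8 * v + i) : (ZMod p)ˣ) : ZMod p)})
    (N : ℤ → ℤ → ℕ)
    (hN : ∀ i j : ℤ, N i j = (Finset.filter
      (fun uv : ℕ × ℕ => (1 : ZMod p) + ((α ^ (8 * (uv.1 : ℤ) + i) : (ZMod p)ˣ) : ZMod p)
        = ((α ^ (8 * (uv.2 : ℤ) + j) : (ZMod p)ˣ) : ZMod p))
      (Finset.range ((p - 1) / 8) ×ˢ Finset.range ((p - 1) / 8))).card)
    (S T : Set (ZMod p)) (hS : S = C 0 ∪ C 7) (hT : T = C 3 ∪ C 4)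
    (x : ℤ → ℕ)
    (hx : ∀ ℓ : ℤ, x ℓ = N 3 (ℓ % 8) + N 4 (ℓ % 8)
      + N 4 ((ℓ + 1) % 8) + N 5 ((ℓ + 1) % 8)) :
    (∀ ℓ : ℤ, 0 ≤ ℓ → ℓ ≤ 7 → ∀ h ∈ C ℓ,
      {st : ZMod p × ZMod p | st.1 ∈ S ∧ st.2 ∈ T ∧ st.1 + st.2 = h}.ncard = x ℓ) ∧
    (∀ ℓ : ℤ, 0 ≤ ℓ → ℓ ≤ 3 → x ℓ = x (ℓ + 4)) := by
  have : Fact p.Prime := ⟨hp⟩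
  have hp2 := hp.two_le
  have hαord : orderOf α = 8 * ((p - 1) / 8) := by
    rw [orderOf_eq_card_of_forall_mem_zpowers hα, Nat.card_eq_fintype_card, ZMod.card_units]
    omega
  have hCα : C = cyclotomicClass α 8 := funext fun i => by simp [hC, cyclotomicClass]
  have hNα {a b a' b' : ℤ} (ha : a % 8 = a' % 8) (hb : b % 8 = b' % 8) :
      N a b = cyclotomicNumber α 8 a' b' := by
    rw [hN, ← cyclotomicNumber_congr ha hb,
      cyclotomicNumber_eq_card_filter hαord (by norm_num) (by omega)]
    simp only [Nat.cast_ofNat]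
  subst hCα hS hT
  have hdisj {i j : ℤ} (h : i % 8 ≠ j % 8) := disjoint_cyclotomicClass (Dvd.intro _ hαord.symm) h
  refine ⟨fun ℓ _ _ h hh => ?_, fun ℓ _ _ => ?_⟩
  · change (Set.antidiagonal _ _ h).ncard = _
    rw [Set.ncard_antidiagonal_union_left (hdisj (by decide)),
      Set.ncard_antidiagonal_union_right _ (hdisj (by decide)),
      Set.ncard_antidiagonal_union_right _ (hdisj (by decide)),
      ncard_antidiagonal_cyclotomicClass hh, ncard_antidiagonal_cyclotomicClass hh,
      ncard_antidiagonal_cyclotomicClass hh, ncard_antidiagonal_cyclotomicClass hh, hx,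
      hNα (a' := 3 - 0) (b' := ℓ - 0) (by omega) (by omega),
      hNα (a' := 4 - 0) (b' := ℓ - 0) (by omega) (by omega),
      hNα (a' := 3 - 7) (b' := ℓ - 7) (by omega) (by omega),
      hNα (a' := 4 - 7) (b' := ℓ - 7) (by omega) (by omega)]
    ring
  · have hNneg (a b a' b' : ℤ) (ha : a % 8 = -a' % 8) (hb : b % 8 = (b' - a') % 8) :
        N a b = N a' b' := by
      rw [hNα ha hb, hNα rfl rfl, ← cyclotomicNumber_neg_sub]
    rw [hx, hx, hNneg 3 ((ℓ + 4) % 8) 5 ((ℓ + 1) % 8) (by omega) (by omega),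
      hNneg 4 ((ℓ + 4) % 8) 4 (ℓ % 8) (by omega) (by omega),
      hNneg 4 ((ℓ + 4 + 1) % 8) 4 ((ℓ + 1) % 8) (by omega) (by omega),
      hNneg 5 ((ℓ + 4 + 1) % 8) 3 (ℓ % 8) (by omega) (by omega)]
    ring
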